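/- arXiv:1904.12751 — 4 statements merged into one kernel-verified Lean document; each statement's English description precedes it below -/
import Mathlib

section
/- Let τ_L denote the exit time out of the interval (-L, L) for a simple symmetric random walk on ℤ started at 0. Then for all n ∈ ℕ and all integers L ≥ 2, one has exp(-n·φ(L)) ≤ P(τ_L > n) ≤ L·exp(-n·φ(L)), where φ(L) = -log cos(π/(2L)). -/
open MeasureTheory ProbabilityTheory Real Finset

/-!
The function `g x = cos (x π / (2L))` is an eigenfunction of the walk killed on leaving `(-L, L)`:
`(g (x + 1) + g (x - 1)) / 2 = cos (π / (2L)) * g x`, and `g` vanishes at `±L`. Hence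
`E[g (S n); τ_L > n] = cos (π / (2L)) ^ n = exp (-n φ(L))`, and since `1/L ≤ g ≤ 1` on `(-L, L)`
this expectation lies between `P(τ_L > n) / L` and `P(τ_L > n)`.
-/

lemma cos_add_one_mul_add_cos_sub_one_mul (t θ : ℝ) :
    cos ((t + 1) * θ) + cos ((t - 1) * θ) = 2 * cos θ * cos (t * θ) := by
  rw [add_mul, sub_mul, one_mul, cos_add, cos_sub]
  ring

lemma cos_int_mul_pi_div_eq_cos_abs (x : ℤ) (L : ℕ) :
    cos (x * (π / (2 * L))) = cos (|x| * (π / (2 * L))) := by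
  rw [← cos_abs, abs_mul, abs_of_nonneg (a := π / (2 * L)) (by positivity), Int.cast_abs]

lemma cos_int_mul_pi_div_of_abs_eq {x : ℤ} {L : ℕ} (hL : L ≠ 0) (hx : |x| = L) :
    cos (x * (π / (2 * L))) = 0 := by
  rw [cos_int_mul_pi_div_eq_cos_abs, hx, Int.cast_natCast,
    show (L : ℝ) * (π / (2 * L)) = π / 2 by field_simp, cos_pi_div_two]

lemma one_div_le_cos_int_mul_pi_div {x : ℤ} {L : ℕ} (hx : |x| < L) :
    1 / L ≤ cos (x * (π / (2 * L))) := by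
  have hL : (1 : ℝ) ≤ L := by exact_mod_cast (by have := abs_nonneg x; omega : 1 ≤ L)
  set θ := π / (2 * L) with hθ
  have hθ_pos : 0 < θ := by positivity
  have hθ_le : θ ≤ π / 2 := div_le_div_of_nonneg_left pi_pos.le two_pos (by linarith)
  have hx' : ((|x| : ℤ) : ℝ) ≤ L - 1 := by exact_mod_cast (by omega : |x| ≤ (L : ℤ) - 1)
  have hLθ : ((L : ℝ) - 1) * θ = π / 2 - θ := by rw [hθ]; field_simp
  calc 1 / (L : ℝ) = 2 / π * θ := by rw [hθ]; field_simp
    _ ≤ sin θ := mul_le_sin hθ_pos.le hθ_le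
    _ = cos ((L - 1) * θ) := by rw [hLθ, cos_pi_div_two_sub]
    _ ≤ cos (|x| * θ) :=
      cos_le_cos_of_nonneg_of_le_pi (by positivity) (by linarith [pi_pos]) (by gcongr)
    _ = cos (x * θ) := (cos_int_mul_pi_div_eq_cos_abs x L).symm

namespace RandomWalk

variable {Ω : Type*} {X : ℕ → Ω → ℤ}

def walk (X : ℕ → Ω → ℤ) (n : ℕ) (ω : Ω) : ℤ := ∑ i ∈ range n, X i ω

def survivalEvent (X : ℕ → Ω → ℤ) (L n : ℕ) : Set Ω := {ω | ∀ k ≤ n, |walk X k ω| < L}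

abbrev firstSteps (X : ℕ → Ω → ℤ) (n : ℕ) : MeasurableSpace Ω :=
  ⨆ i ∈ Set.Iio n, MeasurableSpace.comap (X i) inferInstance

@[simp] lemma walk_zero (ω : Ω) : walk X 0 ω = 0 := by simp [walk]

lemma walk_succ (n : ℕ) (ω : Ω) : walk X (n + 1) ω = walk X n ω + X n ω :=
  sum_range_succ _ _

lemma survivalEvent_zero {L : ℕ} (hL : 0 < L) : survivalEvent X L 0 = Set.univ := by
  ext ω
  simp [survivalEvent, hL]

lemma mem_survivalEvent_succ {L n : ℕ} {ω : Ω} :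
    ω ∈ survivalEvent X L (n + 1) ↔ ω ∈ survivalEvent X L n ∧ |walk X (n + 1) ω| < L := by
  refine ⟨fun h => ⟨fun k hk => h k (hk.trans n.le_succ), h _ le_rfl⟩, ?_⟩
  rintro ⟨h, hsucc⟩ k hk
  rcases Nat.le_succ_iff.1 hk with hk | rfl
  exacts [h k hk, hsucc]

lemma survivalEvent_succ_subset (L n : ℕ) : survivalEvent X L (n + 1) ⊆ survivalEvent X L n :=
  fun _ hω => (mem_survivalEvent_succ.1 hω).1

lemma abs_add_step_eq_of_not_lt {a x L : ℤ} (ha : |a| < L) (hx : x = 1 ∨ x = -1)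
    (hax : ¬|a + x| < L) : |a + x| = L := by
  rw [abs_lt] at ha hax
  rw [abs_eq (by omega)]
  omega

lemma measurable_walk_firstSteps {k n : ℕ} (hk : k ≤ n) :
    Measurable[firstSteps X n] (walk X k) := by
  refine Finset.measurable_sum _ fun i hi => Measurable.of_comap_le ?_
  exact le_iSup₂ (f := fun i (_ : i ∈ Set.Iio n) => MeasurableSpace.comap (X i) inferInstance) i
    (lt_of_lt_of_le (mem_range.1 hi) hk)

lemma measurableSet_survivalEvent_firstSteps (L n : ℕ) :
    MeasurableSet[firstSteps X n] (survivalEvent X L n) := by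
  have : survivalEvent X L n = ⋂ k ∈ Set.Iic n, walk X k ⁻¹' {z | |z| < L} := by
    ext; simp [survivalEvent]
  rw [this]
  exact MeasurableSet.biInter (Set.to_countable _) fun k hk =>
    measurable_walk_firstSteps hk MeasurableSet.of_discrete

variable [mΩ : MeasurableSpace Ω] {μ : Measure Ω}

lemma firstSteps_le (hX : ∀ i, Measurable (X i)) (n : ℕ) : firstSteps X n ≤ mΩ :=
  iSup₂_le fun i _ => (hX i).comap_le

lemma indep_firstSteps (hX : ∀ i, Measurable (X i)) (hindep : iIndepFun X μ) (n : ℕ) :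
    Indep (firstSteps X n) (MeasurableSpace.comap (X n) inferInstance) μ := by
  refine indep_of_indep_of_le_right
    (indep_iSup_of_disjoint (fun i => (hX i).comap_le) hindep
      (S := Set.Iio n) (T := {n}) (by simp)) ?_
  exact le_iSup₂ (f := fun i (_ : i ∈ ({n} : Set ℕ)) => MeasurableSpace.comap (X i) inferInstance)
    n rfl

lemma ae_eq_one_or_eq_neg_one {Y : Ω → ℤ} (hY : Measurable Y) [IsProbabilityMeasure μ]
    (h1 : μ {ω | Y ω = 1} = 1 / 2) (hm1 : μ {ω | Y ω = -1} = 1 / 2) :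
    ∀ᵐ ω ∂μ, Y ω = 1 ∨ Y ω = -1 := by
  have hdisj : Disjoint {ω | Y ω = 1} {ω | Y ω = -1} :=
    Set.disjoint_left.2 fun ω h1 h2 => by simp_all
  refine (ae_iff_measure_eq (p := fun ω => Y ω = 1 ∨ Y ω = -1)
    (hY (MeasurableSet.of_discrete (s := {1, -1}))).nullMeasurableSet).2 ?_
  rw [Set.ofPred_or, measure_union hdisj (hY (measurableSet_singleton (-1))), h1, hm1,
    ENNReal.add_halves, measure_univ]

lemma measurable_walk (hX : ∀ i, Measurable (X i)) (n : ℕ) : Measurable (walk X n) :=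
  (measurable_walk_firstSteps le_rfl).mono (firstSteps_le hX n) le_rfl

lemma measurableSet_survivalEvent (hX : ∀ i, Measurable (X i)) (L n : ℕ) :
    MeasurableSet (survivalEvent X L n) :=
  firstSteps_le hX n _ (measurableSet_survivalEvent_firstSteps L n)

lemma integral_mul_indicator_step (hX : ∀ i, Measurable (X i)) (hindep : iIndepFun X μ)
    {n : ℕ} {F : Ω → ℝ} (hF : Measurable[firstSteps X n] F) (s : ℤ) :
    ∫ ω, F ω * {ω | X n ω = s}.indicator 1 ω ∂μ = (∫ ω, F ω ∂μ) * μ.real {ω | X n ω = s} := by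
  have hXs : {ω | X n ω = s}.indicator (1 : Ω → ℝ) = ({s} : Set ℤ).indicator 1 ∘ X n := rfl
  have hindep_F : IndepFun F (({s} : Set ℤ).indicator (1 : ℤ → ℝ) ∘ X n) μ := by
    refine IndepFun.comp (φ := id) ?_ measurable_id Measurable.of_discrete
    rw [IndepFun_iff_Indep]
    exact indep_of_indep_of_le_left (indep_firstSteps hX hindep n) hF.comap_le
  rw [hXs, IndepFun.integral_fun_mul_eq_mul_integral hindep_F
    (hF.mono (firstSteps_le hX n) le_rfl).aestronglyMeasurable
    (Measurable.of_discrete.comp (hX n)).aestronglyMeasurable, ← hXs,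
    integral_indicator_one (s := {ω | X n ω = s}) (hX n (measurableSet_singleton s))]

variable [IsProbabilityMeasure μ] (hX : ∀ i, Measurable (X i)) (hindep : iIndepFun X μ)
  (hX1 : ∀ i, μ {ω | X i ω = 1} = 1 / 2) (hXm1 : ∀ i, μ {ω | X i ω = -1} = 1 / 2)
include hX hindep hX1 hXm1

lemma integral_apply_step_eq_average {n : ℕ} {G : Ω → ℤ → ℝ}
    (hG : ∀ s, Measurable[firstSteps X n] (G · s)) {C : ℝ} (hGC : ∀ ω s, |G ω s| ≤ C) :
    ∫ ω, G ω (X n ω) ∂μ = ∫ ω, (G ω 1 + G ω (-1)) / 2 ∂μ := by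
  have hint : ∀ s, Integrable (G · s) μ := fun s =>
    .of_bound ((hG s).mono (firstSteps_le hX n) le_rfl).aestronglyMeasurable C
      (ae_of_all _ fun ω => hGC ω s)
  have hint_step : ∀ s, Integrable (fun ω => G ω s * {ω | X n ω = s}.indicator 1 ω) μ :=
    fun s => (hint s).mul_bdd (c := 1)
      (measurable_const.indicator (hX n (measurableSet_singleton s))).aestronglyMeasurable
      (ae_of_all _ fun ω => by by_cases h : X n ω = s <;> simp [h])
  have hsplit : (fun ω => G ω (X n ω)) =ᵐ[μ] fun ω =>
      G ω 1 * {ω | X n ω = 1}.indicator 1 ω + G ω (-1) * {ω | X n ω = -1}.indicator 1 ω := by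
    filter_upwards [ae_eq_one_or_eq_neg_one (hX n) (hX1 n) (hXm1 n)] with ω hω
    rcases hω with h | h <;> simp [h]
  rw [integral_congr_ae hsplit, integral_add (hint_step 1) (hint_step (-1)),
    integral_mul_indicator_step hX hindep (hG 1), integral_mul_indicator_step hX hindep (hG (-1)),
    measureReal_def, measureReal_def, hX1, hXm1, integral_div, integral_add (hint 1) (hint (-1))]
  norm_num
  ring

lemma setIntegral_survivalEvent_succ {L n : ℕ} {f : ℤ → ℝ}
    {C : ℝ} (hfC : ∀ x, |f x| ≤ C) (hfL : ∀ x : ℤ, |x| = L → f x = 0) :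
    ∫ ω in survivalEvent X L (n + 1), f (walk X (n + 1) ω) ∂μ
      = ∫ ω in survivalEvent X L n, (f (walk X n ω + 1) + f (walk X n ω - 1)) / 2 ∂μ := by
  rw [← integral_indicator (measurableSet_survivalEvent hX L (n + 1)),
    ← integral_indicator (measurableSet_survivalEvent hX L n)]
  set G : Ω → ℤ → ℝ := fun ω s =>
    (survivalEvent X L n).indicator (fun ω => f (walk X n ω + s)) ω
  have hG : ∀ s, Measurable[firstSteps X n] (G · s) := fun s =>
    (Measurable.of_discrete.comp ((measurable_walk_firstSteps le_rfl).add_const s)).indicator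
      (measurableSet_survivalEvent_firstSteps L n)
  have hGC : ∀ ω s, |G ω s| ≤ C := fun ω s => by
    by_cases hω : ω ∈ survivalEvent X L n
    · simpa [G, hω] using hfC _
    · simpa [G, hω] using (abs_nonneg _).trans (hfC 0)
  have hkill : ∀ᵐ ω ∂μ,
      (survivalEvent X L (n + 1)).indicator (fun ω => f (walk X (n + 1) ω)) ω = G ω (X n ω) := by
    filter_upwards [ae_eq_one_or_eq_neg_one (hX n) (hX1 n) (hXm1 n)] with ω hXω
    -- a step out of `(-L, L)` lands on `±L`, where `f` vanishes, so killing the walk is invisible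
    by_cases hω : ω ∈ survivalEvent X L n
    · by_cases hstay : |walk X (n + 1) ω| < L
      · simp [G, hω, mem_survivalEvent_succ.2 ⟨hω, hstay⟩, walk_succ]
      · have hexit := abs_add_step_eq_of_not_lt (hω n le_rfl) hXω (walk_succ (X := X) n ω ▸ hstay)
        simp [G, hω, mem_survivalEvent_succ, hstay, hfL _ hexit]
    · rw [Set.indicator_of_notMem fun h => hω (survivalEvent_succ_subset L n h)]
      simp [G, hω]
  rw [integral_congr_ae hkill, integral_apply_step_eq_average hX hindep hX1 hXm1 hG hGC]
  congr 1 with ω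
  by_cases hω : ω ∈ survivalEvent X L n <;> simp [G, hω, sub_eq_add_neg]

lemma setIntegral_cos_walk {L : ℕ} (hL : L ≠ 0) (n : ℕ) :
    ∫ ω in survivalEvent X L n, cos (walk X n ω * (π / (2 * L))) ∂μ = cos (π / (2 * L)) ^ n := by
  induction n with
  | zero => simp [survivalEvent_zero (Nat.pos_of_ne_zero hL)]
  | succ n ih =>
    rw [setIntegral_survivalEvent_succ hX hindep hX1 hXm1 (fun _ => abs_cos_le_one _)
      (fun _ => cos_int_mul_pi_div_of_abs_eq hL)]
    calc _ = ∫ ω in survivalEvent X L n,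
            cos (π / (2 * L)) * cos (walk X n ω * (π / (2 * L))) ∂μ := by
          congr 1 with ω
          push_cast
          rw [cos_add_one_mul_add_cos_sub_one_mul]
          ring
      _ = _ := by rw [integral_const_mul, ih, pow_succ']

end RandomWalk

open RandomWalk

/-- **Exit time bounds for the simple symmetric random walk.**
Let `(X i)` be i.i.d. uniform `±1` steps, `S n = X 1 + ⋯ + X n` the simple symmetric
random walk started at `0`, and `τ_L` the exit time out of `(-L, L)`.  Then for
all `n ∈ ℕ` and integers `L ≥ 2`,
`exp(-n·φ(L)) ≤ P(τ_L > n) ≤ L·exp(-n·φ(L))` where `φ(L) = -log cos(π/(2L))`.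
The event `{τ_L > n}` is `{∀ k ≤ n, |S k| < L}`. -/
theorem srw_exit_time_bounds
    {Ω : Type*} [MeasurableSpace Ω] (μ : Measure Ω) [IsProbabilityMeasure μ]
    (X : ℕ → Ω → ℤ) (hXmeas : ∀ i, Measurable (X i))
    (hindep : iIndepFun X μ)
    (hX1 : ∀ i, μ {ω | X i ω = 1} = 1/2)
    (hXm1 : ∀ i, μ {ω | X i ω = -1} = 1/2)
    (S : ℕ → Ω → ℤ) (hS : ∀ n ω, S n ω = ∑ i ∈ Finset.range n, X i ω)
    (L : ℕ) (hL : 2 ≤ L) (n : ℕ)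
    (φ : ℝ) (hφ : φ = - Real.log (Real.cos (π / (2 * L)))) :
    ENNReal.ofReal (Real.exp (-(n : ℝ) * φ))
      ≤ μ {ω | ∀ k ≤ n, |S k ω| < (L : ℤ)} ∧
    μ {ω | ∀ k ≤ n, |S k ω| < (L : ℤ)}
      ≤ ENNReal.ofReal ((L : ℝ) * Real.exp (-(n : ℝ) * φ)) := by
  obtain rfl : S = walk X := funext fun k => funext (hS k)
  set θ := π / (2 * (L : ℝ))
  set A := survivalEvent X L n
  have hA : MeasurableSet A := measurableSet_survivalEvent hXmeas L n
  have hLpos : (0 : ℝ) < L := by positivity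
  have hθ_pos : 0 < θ := by positivity
  have hθ_lt : θ < π / 2 := div_lt_div_of_pos_left pi_pos two_pos (by norm_cast; omega)
  have hcos_pos : 0 < cos θ := cos_pos_of_mem_Ioo ⟨by linarith [pi_pos], hθ_lt⟩
  have hexp : exp (-(n : ℝ) * φ) = cos θ ^ n := by
    rw [hφ, neg_mul_neg, ← log_pow, exp_log (pow_pos hcos_pos n)]
  have hint : IntegrableOn (fun ω => cos (walk X n ω * θ)) A μ :=
    (Integrable.of_bound ((Measurable.of_discrete (f := fun z : ℤ => cos (z * θ))).comp
      (measurable_walk hXmeas n)).aestronglyMeasurable 1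
      (ae_of_all _ fun _ => by simpa using abs_cos_le_one _)).integrableOn
  have hintegral := setIntegral_cos_walk hXmeas hindep hX1 hXm1 (by omega : L ≠ 0) n
  have hlower : cos θ ^ n ≤ μ.real A := by
    calc cos θ ^ n = ∫ ω in A, cos (walk X n ω * θ) ∂μ := hintegral.symm
      _ ≤ ∫ _ in A, (1 : ℝ) ∂μ := setIntegral_mono_on hint integrableOn_const hA
          fun _ _ => cos_le_one _
      _ = μ.real A := by simp
  have hupper : μ.real A ≤ L * cos θ ^ n := by
    have := hintegral ▸ setIntegral_ge_of_const_le_real hA (measure_ne_top μ A)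
      (fun ω hω => one_div_le_cos_int_mul_pi_div (hω n le_rfl)) hint
    rwa [one_div, inv_mul_le_iff₀ hLpos] at this
  rw [hexp, ← ofReal_measureReal]
  exact ⟨ENNReal.ofReal_le_ofReal hlower, ENNReal.ofReal_le_ofReal hupper⟩
end

section
/- Size-bias identity: a nonnegative ℤ²-shift-compatible observable Φ satisfies E[Φ] = E[Φ · |C(o)| · 1{o ∈ Trap}], provided that almost surely every vertex leads to a unique trap vertex and that |C(o)| is the number of vertices whose path passes through o before reaching a trap. -/
open MeasureTheory

/-- **Size-bias identity.**  On a probability space carrying a translation-invariant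
random directed graph on `ℤ²` encoded by an accessibility relation `R ω u v`
("the forward path from `u` reaches `v` without crossing a trap strictly before `v`")
and a translation-covariant random set `Trap`, suppose that almost surely every
vertex `u` leads to a unique trap vertex.  For `o ∈ ℤ²` let
`C o ω = {u : R ω u o ∨ R ω o u}` be the component of `o`.  If `Φ ≥ 0` is measurable
and almost surely shift-compatible along `C o`, i.e. `Φ(τ_u ω) = Φ(ω)` for all
`u ∈ C o ω`, then `E[Φ] = E[Φ · |C(o)| · 1{o ∈ Trap}]`. -/
theorem size_bias_identity
    {Ω : Type*} [MeasurableSpace Ω] (μ : Measure Ω) [IsProbabilityMeasure μ]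
    (τ : ℤ × ℤ → Ω → Ω) (hτmeas : ∀ u, Measurable (τ u))
    (hτmp : ∀ u, MeasurePreserving (τ u) μ μ)
    (R : Ω → ℤ × ℤ → ℤ × ℤ → Prop)
    (hRmeas : ∀ a b, MeasurableSet {ω | R ω a b})
    (Trap : Ω → Set (ℤ × ℤ))
    (hTrapMeas : ∀ a, MeasurableSet {ω | a ∈ Trap ω})
    -- translation covariance of the graph and of the traps
    (hRcov : ∀ (u a b : ℤ × ℤ) (ω : Ω), R (τ u ω) a b ↔ R ω (a + u) (b + u))
    (hTrapCov : ∀ (u a : ℤ × ℤ) (ω : Ω), a ∈ Trap (τ u ω) ↔ a + u ∈ Trap ω)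
    -- almost surely, every vertex leads to a unique trap vertex
    (hUnique : ∀ᵐ ω ∂μ, ∀ a : ℤ × ℤ, ∃! v : ℤ × ℤ, v ∈ Trap ω ∧ R ω a v)
    (o : ℤ × ℤ)
    (C : Ω → Set (ℤ × ℤ)) (hC : ∀ ω, C ω = {u | R ω u o ∨ R ω o u})
    -- `C(o)` contains at most one trap vertex
    (hCone : ∀ ω, Set.Subsingleton (C ω ∩ Trap ω))
    (Φ : Ω → ENNReal) (hΦmeas : Measurable Φ)
    (hΦinv : ∀ᵐ ω ∂μ, ∀ u ∈ C ω, Φ (τ u ω) = Φ ω) :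
    ∫⁻ ω, Φ ω ∂μ
      = ∫⁻ ω in {ω | o ∈ Trap ω},
          Φ ω * ∑' u : ℤ × ℤ, (C ω).indicator (fun _ => (1 : ENNReal)) u ∂μ := by
  classical
  -- `G w` : the "trap at `w`, reached from the origin" indicator of `Φ`
  have hGmeas : ∀ w : ℤ × ℤ,
      Measurable (Set.indicator {ω' : Ω | w ∈ Trap ω' ∧ R ω' 0 w} Φ) := by
    intro w
    apply hΦmeas.indicator
    have : {ω' : Ω | w ∈ Trap ω' ∧ R ω' 0 w}
        = {ω' | w ∈ Trap ω'} ∩ {ω' | R ω' 0 w} := rfl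
    rw [this]
    exact (hTrapMeas w).inter (hRmeas 0 w)
  have hFmeas : ∀ u : ℤ × ℤ,
      Measurable (Set.indicator {ω' : Ω | o ∈ Trap ω' ∧ (R ω' u o ∨ R ω' o u)} Φ) := by
    intro u
    apply hΦmeas.indicator
    have : {ω' : Ω | o ∈ Trap ω' ∧ (R ω' u o ∨ R ω' o u)}
        = {ω' | o ∈ Trap ω'} ∩ ({ω' | R ω' u o} ∪ {ω' | R ω' o u}) := by
      ext ω'; simp [Set.mem_setOf_eq]
    rw [this]
    exact (hTrapMeas o).inter ((hRmeas u o).union (hRmeas o u))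
  have hCmem : ∀ (ω : Ω) (u : ℤ × ℤ), u ∈ C ω ↔ (R ω u o ∨ R ω o u) := by
    intro ω u; rw [hC]; exact Iff.rfl
  -- Step 1 : `∫ Φ = ∑_w ∫ G w`
  have hsum1 : ∀ᵐ ω ∂μ,
      (∑' w : ℤ × ℤ, Set.indicator {ω' : Ω | w ∈ Trap ω' ∧ R ω' 0 w} Φ ω) = Φ ω := by
    filter_upwards [hUnique] with ω hω
    obtain ⟨v₀, ⟨hvT, hvR⟩, hvU⟩ := hω 0
    have hz : ∀ w : ℤ × ℤ, w ≠ v₀ →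
        Set.indicator {ω' : Ω | w ∈ Trap ω' ∧ R ω' 0 w} Φ ω = 0 := by
      intro w hw
      apply Set.indicator_of_notMem
      rintro ⟨h1, h2⟩
      exact hw (hvU w ⟨h1, h2⟩)
    rw [tsum_eq_single v₀ hz]
    exact Set.indicator_of_mem (show ω ∈ {ω' : Ω | v₀ ∈ Trap ω' ∧ R ω' 0 v₀} from ⟨hvT, hvR⟩) Φ
  have hLHS : ∫⁻ ω, Φ ω ∂μ
      = ∑' w : ℤ × ℤ, ∫⁻ ω, Set.indicator {ω' : Ω | w ∈ Trap ω' ∧ R ω' 0 w} Φ ω ∂μ := by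
    rw [← lintegral_tsum (fun w => (hGmeas w).aemeasurable)]
    exact lintegral_congr_ae (hsum1.mono fun ω h => h.symm)
  -- Step 2 : the right-hand side equals `∑_u ∫ F u`
  have hRHS : (∫⁻ ω in {ω | o ∈ Trap ω},
        Φ ω * ∑' u : ℤ × ℤ, (C ω).indicator (fun _ => (1 : ENNReal)) u ∂μ)
      = ∑' u : ℤ × ℤ,
          ∫⁻ ω, Set.indicator {ω' : Ω | o ∈ Trap ω' ∧ (R ω' u o ∨ R ω' o u)} Φ ω ∂μ := by
    rw [← lintegral_indicator (hTrapMeas o), ← lintegral_tsum (fun u => (hFmeas u).aemeasurable)]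
    refine lintegral_congr fun ω => ?_
    by_cases h1 : o ∈ Trap ω
    · rw [Set.indicator_of_mem (show ω ∈ {ω : Ω | o ∈ Trap ω} from h1), ← ENNReal.tsum_mul_left]
      refine tsum_congr fun u => ?_
      by_cases h2 : u ∈ C ω
      · rw [Set.indicator_of_mem h2, Set.indicator_of_mem
          (show ω ∈ {ω' : Ω | o ∈ Trap ω' ∧ (R ω' u o ∨ R ω' o u)} from ⟨h1, (hCmem ω u).1 h2⟩),
          mul_one]
      · rw [Set.indicator_of_notMem h2, Set.indicator_of_notMem
          (show ω ∉ {ω' : Ω | o ∈ Trap ω' ∧ (R ω' u o ∨ R ω' o u)} from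
            fun h => h2 ((hCmem ω u).2 h.2)), mul_zero]
    · rw [Set.indicator_of_notMem (show ω ∉ {ω : Ω | o ∈ Trap ω} from h1)]
      symm
      refine (tsum_congr fun u => ?_).trans tsum_zero
      exact Set.indicator_of_notMem
        (show ω ∉ {ω' : Ω | o ∈ Trap ω' ∧ (R ω' u o ∨ R ω' o u)} from fun h => h1 h.1) Φ
  -- Step 3 : the shift identity, term by term
  have hshift : ∀ u : ℤ × ℤ,
      (∫⁻ ω, Set.indicator {ω' : Ω | o ∈ Trap ω' ∧ (R ω' u o ∨ R ω' o u)} Φ ω ∂μ)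
      = ∫⁻ ω, Set.indicator {ω' : Ω | (o - u) ∈ Trap ω' ∧ R ω' 0 (o - u)} Φ ω ∂μ := by
    intro u
    have hB'meas : MeasurableSet {ω' : Ω | (o - u) ∈ Trap ω' ∧ (R ω' 0 (o - u) ∨ R ω' (o - u) 0)} := by
      have : {ω' : Ω | (o - u) ∈ Trap ω' ∧ (R ω' 0 (o - u) ∨ R ω' (o - u) 0)}
          = {ω' | (o - u) ∈ Trap ω'} ∩ ({ω' | R ω' 0 (o - u)} ∪ {ω' | R ω' (o - u) 0}) := by
        ext ω'; simp [Set.mem_setOf_eq]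
      rw [this]
      exact (hTrapMeas _).inter ((hRmeas _ _).union (hRmeas _ _))
    -- 3a : replace `Φ` by `Φ ∘ τ u` on the event
    have st1 : (∫⁻ ω, Set.indicator {ω' : Ω | o ∈ Trap ω' ∧ (R ω' u o ∨ R ω' o u)} Φ ω ∂μ)
        = ∫⁻ ω, Set.indicator {ω' : Ω | o ∈ Trap ω' ∧ (R ω' u o ∨ R ω' o u)}
            (fun ω' => Φ (τ u ω')) ω ∂μ := by
      refine lintegral_congr_ae ?_
      filter_upwards [hΦinv] with ω hω
      by_cases hm : ω ∈ {ω' : Ω | o ∈ Trap ω' ∧ (R ω' u o ∨ R ω' o u)}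
      · rw [Set.indicator_of_mem hm, Set.indicator_of_mem hm]
        exact (hω u ((hCmem ω u).2 hm.2)).symm
      · rw [Set.indicator_of_notMem hm, Set.indicator_of_notMem hm]
    -- 3b : recognize a composition with `τ u` and use measure preservation
    have st2 : ∀ ω : Ω,
        Set.indicator {ω' : Ω | o ∈ Trap ω' ∧ (R ω' u o ∨ R ω' o u)} (fun ω' => Φ (τ u ω')) ω
        = Set.indicator {ω' : Ω | (o - u) ∈ Trap ω' ∧ (R ω' 0 (o - u) ∨ R ω' (o - u) 0)} Φ (τ u ω) := by
      intro ω
      have e1 : o - u + u = o := by ring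
      have e2 : (0 : ℤ × ℤ) + u = u := by ring
      have hiff : τ u ω ∈ {ω' : Ω | (o - u) ∈ Trap ω' ∧ (R ω' 0 (o - u) ∨ R ω' (o - u) 0)}
          ↔ ω ∈ {ω' : Ω | o ∈ Trap ω' ∧ (R ω' u o ∨ R ω' o u)} := by
        simp only [Set.mem_setOf_eq, hTrapCov, hRcov, e1, e2]
      by_cases hm : ω ∈ {ω' : Ω | o ∈ Trap ω' ∧ (R ω' u o ∨ R ω' o u)}
      · rw [Set.indicator_of_mem hm, Set.indicator_of_mem (hiff.2 hm)]
      · rw [Set.indicator_of_notMem hm, Set.indicator_of_notMem (fun h => hm (hiff.1 h))]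
    have st3 : (∫⁻ ω, Set.indicator {ω' : Ω | (o - u) ∈ Trap ω' ∧ (R ω' 0 (o - u) ∨ R ω' (o - u) 0)}
            Φ (τ u ω) ∂μ)
        = ∫⁻ ω, Set.indicator {ω' : Ω | (o - u) ∈ Trap ω' ∧ (R ω' 0 (o - u) ∨ R ω' (o - u) 0)} Φ ω ∂μ :=
      (hτmp u).lintegral_comp (hΦmeas.indicator hB'meas)
    -- 3c : drop the backward disjunct, using uniqueness of traps and `hCone`
    have st4 : (∫⁻ ω, Set.indicator {ω' : Ω | (o - u) ∈ Trap ω' ∧ (R ω' 0 (o - u) ∨ R ω' (o - u) 0)} Φ ω ∂μ)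
        = ∫⁻ ω, Set.indicator {ω' : Ω | (o - u) ∈ Trap ω' ∧ R ω' 0 (o - u)} Φ ω ∂μ := by
      refine lintegral_congr_ae ?_
      filter_upwards [hUnique] with ω hω
      by_cases hm : (o - u) ∈ Trap ω ∧ R ω 0 (o - u)
      · rw [Set.indicator_of_mem (show ω ∈ {ω' : Ω | (o - u) ∈ Trap ω' ∧ (R ω' 0 (o - u) ∨ R ω' (o - u) 0)}
            from ⟨hm.1, Or.inl hm.2⟩),
          Set.indicator_of_mem (show ω ∈ {ω' : Ω | (o - u) ∈ Trap ω' ∧ R ω' 0 (o - u)} from hm)]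
      · have hm' : ω ∉ {ω' : Ω | (o - u) ∈ Trap ω' ∧ (R ω' 0 (o - u) ∨ R ω' (o - u) 0)} := by
          rintro ⟨h1, h2⟩
          apply hm
          refine ⟨h1, ?_⟩
          rcases h2 with h2 | h2
          · exact h2
          · -- `o - u` is a trap whose path reaches `0`; compare with the trap of `0`
            obtain ⟨v₀, ⟨hvT, hvR⟩, hvU⟩ := hω 0
            have key : o - u = v₀ := by
              have c1 : (o + (o - u)) ∈ C (τ (-o) ω) ∩ Trap (τ (-o) ω) := by
                refine ⟨?_, ?_⟩
                · rw [hC]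
                  simp only [Set.mem_setOf_eq]
                  left
                  rw [hRcov]
                  have ea : o + (o - u) + -o = o - u := by ring
                  have eb : o + -o = (0 : ℤ × ℤ) := by ring
                  rw [ea, eb]
                  exact h2
                · rw [hTrapCov]
                  have ea : o + (o - u) + -o = o - u := by ring
                  rw [ea]
                  exact h1
              have c2 : (o + v₀) ∈ C (τ (-o) ω) ∩ Trap (τ (-o) ω) := by
                refine ⟨?_, ?_⟩
                · rw [hC]
                  simp only [Set.mem_setOf_eq]
                  right
                  rw [hRcov]
                  have ea : o + v₀ + -o = v₀ := by ring
                  have eb : o + -o = (0 : ℤ × ℤ) := by ring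
                  rw [ea, eb]
                  exact hvR
                · rw [hTrapCov]
                  have ea : o + v₀ + -o = v₀ := by ring
                  rw [ea]
                  exact hvT
              exact add_left_cancel (hCone (τ (-o) ω) c1 c2)
            rw [key]
            exact hvR
        rw [Set.indicator_of_notMem hm',
          Set.indicator_of_notMem (show ω ∉ {ω' : Ω | (o - u) ∈ Trap ω' ∧ R ω' 0 (o - u)} from hm)]
    exact st1.trans ((lintegral_congr st2).trans (st3.trans st4))
  -- Step 4 : reindex the sum by `w = o - u`
  have hre : (∑' u : ℤ × ℤ,
        ∫⁻ ω, Set.indicator {ω' : Ω | (o - u) ∈ Trap ω' ∧ R ω' 0 (o - u)} Φ ω ∂μ)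
      = ∑' w : ℤ × ℤ, ∫⁻ ω, Set.indicator {ω' : Ω | w ∈ Trap ω' ∧ R ω' 0 w} Φ ω ∂μ :=
    (Equiv.subLeft o).tsum_eq
      (fun w => ∫⁻ ω, Set.indicator {ω' : Ω | w ∈ Trap ω' ∧ R ω' 0 w} Φ ω ∂μ)
  -- Conclusion
  rw [hLHS, hRHS, ← hre]
  exact tsum_congr fun u => (hshift u).symm
end

section
/- Let T = inf{n ≥ 0 : X_{n+1} = X_n − 1} be the first time the walk steps left. Then, assuming U and V are i.i.d. symmetric ±1 sequences independent of each other, conditionally on the filtration up to time T and on {T < ∞}, the variable V_{X_T} is uniform on {−1,+1}: P(V_{X_T} = +1, A ∩ {T < ∞}) = (1/2) P(A ∩ {T < ∞}) for every event A in the sigma-algebra 𝓕_T. -/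
/-!
Before its first left step the walk has only moved right, so at the first left step `T = n`
it stands on the line `X = n`, and `V_{X_T} = V_n` there.  The event `A ∩ {T = n}` only
depends on the coins `U_y` and `V_x` with `x < n`, which are independent of `V_n`; summing
`P(A ∩ {T = n} ∩ {V_n = 1}) = P(A ∩ {T = n}) / 2` over `n` gives the theorem.
-/

open MeasureTheory ProbabilityTheory

/-- The deterministic diagonal walk on the randomly oriented Manhattan lattice. -/
def manhattanWalk (U V : ℤ → ℤ) : ℕ → ℤ × ℤ
  | 0 => (0, 0)
  | n + 1 =>
      ((manhattanWalk U V n).1 + U (manhattanWalk U V n).2,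
       (manhattanWalk U V n).2 + V (manhattanWalk U V n).1)

theorem ProbabilityTheory.iIndepFun.measure_inter_preimage_eq_mul_of_measurableSet_iSup_ne
    {Ω ι β : Type*} {mΩ : MeasurableSpace Ω} {mβ : MeasurableSpace β} {μ : Measure Ω}
    {f : ι → Ω → β} (hf : iIndepFun f μ) (hmeas : ∀ i, Measurable (f i)) (j : ι) {E : Set Ω}
    (hE : MeasurableSet[⨆ i ∈ ({j}ᶜ : Set ι), mβ.comap (f i)] E)
    {t : Set β} (ht : MeasurableSet t) :
    μ (E ∩ f j ⁻¹' t) = μ E * μ (f j ⁻¹' t) := by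
  have hindep := indep_iSup_of_disjoint (fun i => (hmeas i).comap_le)
    ((iIndepFun_iff_iIndep _ _ _).1 hf) (disjoint_compl_left (a := ({j} : Set ι)))
  refine (Indep_iff _ _ μ).1 hindep E _ hE ?_
  exact le_iSup₂ (f := fun i (_ : i ∈ ({j} : Set ι)) => mβ.comap (f i)) j rfl _ ⟨t, ht, rfl⟩

theorem comap_window_le_iSup_ne_inr {Ω β : Type*} [MeasurableSpace β]
    (U V : ℤ → Ω → β) (n : ℕ) :
    MeasurableSpace.comap
        (fun ω => ((fun y : Set.Icc (-(n : ℤ)) (n : ℤ) => U y ω),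
                   (fun x : Set.Icc (-(n : ℤ)) ((n : ℤ) - 1) => V x ω)))
        inferInstance
      ≤ ⨆ i ∈ ({Sum.inr (n : ℤ)}ᶜ : Set (ℤ ⊕ ℤ)),
          MeasurableSpace.comap (Sum.elim U V i) inferInstance := by
  let m : ∀ i, i ∈ ({Sum.inr (n : ℤ)}ᶜ : Set (ℤ ⊕ ℤ)) → MeasurableSpace Ω :=
    fun i _ => MeasurableSpace.comap (Sum.elim U V i) inferInstance
  let _ : MeasurableSpace Ω := ⨆ i, ⨆ hi, m i hi
  refine Measurable.comap_le (Measurable.prodMk (measurable_pi_lambda _ fun y => ?_)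
    (measurable_pi_lambda _ fun x => ?_))
  · exact Measurable.of_comap_le (le_iSup₂ (f := m) (Sum.inl y) (by simp))
  · refine Measurable.of_comap_le (le_iSup₂ (f := m) (Sum.inr x) ?_)
    have := x.2.2
    simp only [Set.mem_compl_iff, Set.mem_singleton_iff, Sum.inr.injEq]
    omega

theorem ae_eq_or_eq_of_measure_add_measure_eq_one {Ω β : Type*} [MeasurableSpace Ω]
    [MeasurableSpace β] [MeasurableSingletonClass β] {μ : Measure Ω} [IsProbabilityMeasure μ]
    {X : Ω → β} (hX : Measurable X) {a b : β} (hab : a ≠ b)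
    (h : μ {ω | X ω = a} + μ {ω | X ω = b} = 1) :
    ∀ᵐ ω ∂μ, X ω = a ∨ X ω = b := by
  have hdisj : Disjoint {ω | X ω = a} {ω | X ω = b} :=
    Set.disjoint_left.2 fun ω ha hb => hab (ha.symm.trans hb)
  have hmeas : MeasurableSet {ω | X ω = a ∨ X ω = b} := by
    rw [Set.ofPred_or]
    exact (hX (measurableSet_singleton a)).union (hX (measurableSet_singleton b))
  rw [ae_iff_measure_eq hmeas.nullMeasurableSet, measure_univ, Set.ofPred_or,
    measure_union hdisj (hX (measurableSet_singleton b)), h]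

theorem manhattanWalk_fst_eq_of_forall_ne {U V : ℤ → ℤ} (hU : ∀ y, U y = 1 ∨ U y = -1) {n : ℕ}
    (h : ∀ k < n, (manhattanWalk U V (k + 1)).1 ≠ (manhattanWalk U V k).1 - 1) :
    (manhattanWalk U V n).1 = n := by
  induction n with
  | zero => rfl
  | succ m ih =>
    have hm := ih fun k hk => h k (Nat.lt_succ_of_lt hk)
    have hstep := h m (Nat.lt_succ_self m)
    simp only [manhattanWalk] at hstep ⊢
    rcases hU (manhattanWalk U V m).2 with hr | hl
    · rw [hr, hm]; push_cast; ring
    · exact absurd (by rw [hl]; ring) hstep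

theorem pairwise_disjoint_setOf_of_iff_first {Ω : Type*} {P L : ℕ → Ω → Prop}
    (hP : ∀ n ω, P n ω ↔ L n ω ∧ ∀ k < n, ¬ L k ω) :
    Pairwise (Function.onFun Disjoint fun n => {ω | P n ω}) := by
  have : (fun n => {ω | P n ω}) = disjointed (fun n => {ω | L n ω}) := by
    ext n ω
    simp [disjointed_eq_inter_compl, hP]
  exact this ▸ disjoint_disjointed _

theorem measure_iUnion_inter_eq_mul {Ω ι : Type*} [MeasurableSpace Ω] [Countable ι]
    {μ : Measure Ω} {E C : ι → Set Ω} (hE : ∀ i, MeasurableSet (E i))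
    (hC : ∀ i, MeasurableSet (C i)) (hdisj : Pairwise (Function.onFun Disjoint E))
    {c : ENNReal} (h : ∀ i, μ (E i ∩ C i) = c * μ (E i)) :
    μ (⋃ i, E i ∩ C i) = c * μ (⋃ i, E i) := by
  rw [measure_iUnion (fun i j hij => (hdisj hij).mono Set.inter_subset_left
      Set.inter_subset_left) fun i => (hE i).inter (hC i),
    measure_iUnion hdisj hE, tsum_congr h, ENNReal.tsum_mul_left]

theorem ae_fst_eq_of_first_left_step {Ω : Type*} [MeasurableSpace Ω] {μ : Measure Ω}
    {U V : ℤ → Ω → ℤ} (hU : ∀ᵐ ω ∂μ, ∀ y, U y ω = 1 ∨ U y ω = -1)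
    {Z : Ω → ℕ → ℤ × ℤ}
    (hZ : ∀ ω n, Z ω n = manhattanWalk (fun y => U y ω) (fun x => V x ω) n)
    {firstLeft : ℕ → Ω → Prop}
    (hfirstLeft : ∀ n ω, firstLeft n ω →
      ∀ k < n, (Z ω (k+1)).1 ≠ (Z ω k).1 - 1) :
    ∀ᵐ ω ∂μ, ∀ n, firstLeft n ω → (Z ω n).1 = n := by
  filter_upwards [hU] with ω hω n hn
  rw [hZ]
  refine manhattanWalk_fst_eq_of_forall_ne hω fun k hk => ?_
  simpa only [hZ] using hfirstLeft n ω hn k hk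

theorem fresh_coin_at_first_left_step_general
    {Ω : Type*} [MeasurableSpace Ω] (μ : Measure Ω) [IsProbabilityMeasure μ]
    (U V : ℤ → Ω → ℤ)
    (hUmeas : ∀ y, Measurable (U y)) (hVmeas : ∀ x, Measurable (V x))
    (hU1 : ∀ y, μ {ω | U y ω = 1} = 1/2) (hUm1 : ∀ y, μ {ω | U y ω = -1} = 1/2)
    (hV1 : ∀ x, μ {ω | V x ω = 1} = 1/2)
    (hindep : iIndepFun
      (fun i : ℤ ⊕ ℤ => Sum.elim U V i) μ)
    (Z : Ω → ℕ → ℤ × ℤ)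
    (hZ : ∀ ω n, Z ω n = manhattanWalk (fun y => U y ω) (fun x => V x ω) n)
    (firstLeft : ℕ → Ω → Prop)
    (hfirstLeft : ∀ n ω, firstLeft n ω ↔
      ((Z ω (n+1)).1 = (Z ω n).1 - 1 ∧ ∀ k < n, (Z ω (k+1)).1 ≠ (Z ω k).1 - 1))
    (A : Set Ω)
    (hA : ∀ n : ℕ,
      MeasurableSet[MeasurableSpace.comap
        (fun ω => ((fun y : Set.Icc (-(n : ℤ)) (n : ℤ) => U y ω),
                   (fun x : Set.Icc (-(n : ℤ)) ((n : ℤ) - 1) => V x ω)))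
        inferInstance]
      (A ∩ {ω | firstLeft n ω})) :
    μ ({ω | ∃ n, firstLeft n ω ∧ V (Z ω n).1 ω = 1} ∩ A)
      = (1/2) * μ ({ω | ∃ n, firstLeft n ω} ∩ A) := by
  set E : ℕ → Set Ω := fun n => A ∩ {ω | firstLeft n ω} with hE
  have hmeas : ∀ i, Measurable (Sum.elim U V i) := Sum.rec hUmeas hVmeas
  have hE_past (n : ℕ) := comap_window_le_iSup_ne_inr U V n _ (hA n)
  have hE_meas (n : ℕ) : MeasurableSet (E n) :=
    iSup₂_le (fun i _ => (hmeas i).comap_le) _ (hE_past n)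
  have hE_disj : Pairwise (Function.onFun Disjoint E) := fun m n hmn =>
    (pairwise_disjoint_setOf_of_iff_first (L := fun n ω => (Z ω (n + 1)).1 = (Z ω n).1 - 1)
      hfirstLeft hmn).mono Set.inter_subset_right Set.inter_subset_right
  have hcoin (n : ℕ) : μ (E n ∩ {ω | V n ω = 1}) = 1/2 * μ (E n) := by
    rw [← hV1 n, mul_comm]
    exact hindep.measure_inter_preimage_eq_mul_of_measurableSet_iSup_ne hmeas (Sum.inr n)
      (hE_past n) (measurableSet_singleton 1)
  have hU : ∀ᵐ ω ∂μ, ∀ y, U y ω = 1 ∨ U y ω = -1 := ae_all_iff.2 fun y =>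
    ae_eq_or_eq_of_measure_add_measure_eq_one (hUmeas y) (by norm_num)
      (by rw [hU1, hUm1, ENNReal.add_halves])
  have hpos := ae_fst_eq_of_first_left_step hU hZ fun n ω hn => ((hfirstLeft n ω).1 hn).2
  have hunion : ({ω | ∃ n, firstLeft n ω ∧ V (Z ω n).1 ω = 1} ∩ A : Set Ω)
      =ᵐ[μ] (⋃ n, E n ∩ {ω | V n ω = 1} : Set Ω) := by
    rw [Filter.eventuallyEq_set]
    filter_upwards [hpos] with ω hω
    simp only [hE, Set.mem_inter_iff, Set.mem_ofPred_eq, Set.mem_iUnion]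
    exact ⟨fun ⟨⟨n, hn, hV⟩, hA⟩ => ⟨n, ⟨hA, hn⟩, hω n hn ▸ hV⟩,
      fun ⟨n, ⟨hA, hn⟩, hV⟩ => ⟨⟨n, hn, (hω n hn).symm ▸ hV⟩, hA⟩⟩
  rw [measure_congr hunion, measure_iUnion_inter_eq_mul (C := fun n : ℕ => {ω | V n ω = 1})
    hE_meas (fun n => hVmeas n (measurableSet_singleton 1)) hE_disj hcoin]
  congr 2
  ext ω
  simp [hE, and_comm]

/-- **The orientation of the new vertical line at time `T` is a fresh fair coin.**
Let `U, V` be independent i.i.d. families, uniform on `{−1,+1}`, and `Z = (X, Y)`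
the diagonal walk.  Let `T = inf{n ≥ 0 : X (n+1) = X n − 1}` be the first time the
walk steps left ("`T = n`" is the event `firstLeft n`).  Then for every event `A`
in `𝓕_T` (i.e. such that `A ∩ {T = n}` is, for every `n`, measurable with respect
to the σ-algebra generated by `(U_y)_{|y| ≤ n}` and `(V_x)_{|x| ≤ n−1}`),
`P({V_{X_T} = +1} ∩ A ∩ {T < ∞}) = (1/2) · P(A ∩ {T < ∞})`. -/
theorem fresh_coin_at_first_left_step
    {Ω : Type*} [MeasurableSpace Ω] (μ : Measure Ω) [IsProbabilityMeasure μ]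
    (U V : ℤ → Ω → ℤ)
    (hUmeas : ∀ y, Measurable (U y)) (hVmeas : ∀ x, Measurable (V x))
    (hU1 : ∀ y, μ {ω | U y ω = 1} = 1/2) (hUm1 : ∀ y, μ {ω | U y ω = -1} = 1/2)
    (hV1 : ∀ x, μ {ω | V x ω = 1} = 1/2) (hVm1 : ∀ x, μ {ω | V x ω = -1} = 1/2)
    (hindep : iIndepFun
      (fun i : ℤ ⊕ ℤ => Sum.elim U V i) μ)
    (Z : Ω → ℕ → ℤ × ℤ)
    (hZ : ∀ ω n, Z ω n = manhattanWalk (fun y => U y ω) (fun x => V x ω) n)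
    (firstLeft : ℕ → Ω → Prop)
    (hfirstLeft : ∀ n ω, firstLeft n ω ↔
      ((Z ω (n+1)).1 = (Z ω n).1 - 1 ∧ ∀ k < n, (Z ω (k+1)).1 ≠ (Z ω k).1 - 1))
    (A : Set Ω)
    (hA : ∀ n : ℕ,
      MeasurableSet[MeasurableSpace.comap
        (fun ω => ((fun y : Set.Icc (-(n : ℤ)) (n : ℤ) => U y ω),
                   (fun x : Set.Icc (-(n : ℤ)) ((n : ℤ) - 1) => V x ω)))
        inferInstance]
      (A ∩ {ω | firstLeft n ω})) :
    μ ({ω | ∃ n, firstLeft n ω ∧ V (Z ω n).1 ω = 1} ∩ A)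
      = (1/2) * μ ({ω | ∃ n, firstLeft n ω} ∩ A) :=
  fresh_coin_at_first_left_step_general μ U V hUmeas hVmeas hU1 hUm1 hV1 hindep Z hZ firstLeft
    hfirstLeft A hA
end

section
/- Stretched-exponential lower bound: for the diagonal walk on the 2D randomly oriented Manhattan lattice with i.i.d. uniform orientations, there exist constants C₁, c₁ > 0 such that for all n, P(max_{i≥0} ‖Z_i‖ > n) ≥ C₁ exp(−c₁ n^{1/3}). -/
open MeasureTheory ProbabilityTheory

/-! If `U y = 1` for every `|y| < L`, then as long as the vertical coordinate stays in `(-L, L)`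
the walk steps to the right every time, so its vertical coordinate is the simple random walk
`∑ i < j, V i`. Forcing the `U`'s costs `2 ^ (-(2L - 1))`. Keeping the `V`-walk inside `(-L, L)`
for `n` steps has probability at least `cos (π / 2L) ^ n`: the function `cos (π x / 2L)` vanishes
at `±L` and is an eigenfunction of the discrete Laplacian with eigenvalue `cos (π / 2L)`, so summing
it over confined paths gives exactly `(2 cos (π / 2L)) ^ n`. With `L ≈ n ^ (1/3)` both costs are
`exp (-O(n ^ (1/3)))`, and the walk then reaches horizontal distance `n + 1`. -/

open Finset Real
open scoped ENNReal

namespace ProbabilityTheory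

variable {Ω ι κ β : Type*} [MeasurableSpace Ω] {μ : Measure Ω} [MeasurableSpace β]
  [MeasurableSingletonClass β] {X : ι → Ω → β}

lemma iIndepFun.measure_iInter_preimage_singleton (hX : iIndepFun X μ) (S : Finset ι)
    (a : ι → β) {p : ℝ≥0∞} (hp : ∀ i ∈ S, μ (X i ⁻¹' {a i}) = p) :
    μ (⋂ i ∈ S, X i ⁻¹' {a i}) = p ^ #S := by
  rw [hX.measure_inter_preimage_eq_mul S fun i _ => measurableSet_singleton (a i),
    prod_congr rfl hp, prod_const]

lemma iIndepFun.measure_biUnion_iInter_preimage_singleton (hXm : ∀ i, Measurable (X i))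
    (hX : iIndepFun X μ) (S : Finset ι) (F : Finset κ) (a : κ → ι → β)
    (ha : ∀ k ∈ F, ∀ l ∈ F, (∀ i ∈ S, a k i = a l i) → k = l) {p : ℝ≥0∞}
    (hp : ∀ k ∈ F, ∀ i ∈ S, μ (X i ⁻¹' {a k i}) = p) :
    μ (⋃ k ∈ F, ⋂ i ∈ S, X i ⁻¹' {a k i}) = #F * p ^ #S := by
  rw [measure_biUnion_finset, sum_congr rfl fun k hk =>
    hX.measure_iInter_preimage_singleton S (a k) (hp k hk), sum_const, nsmul_eq_mul]
  · intro k hk l hl hkl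
    refine Set.disjoint_left.2 fun ω hωk hωl => hkl (ha k hk l hl fun i hi => ?_)
    simp only [Set.mem_iInter₂, Set.mem_preimage, Set.mem_singleton_iff] at hωk hωl
    rw [← hωk i hi, hωl i hi]
  · exact fun k _ => .biInter S.countable_toSet fun i _ => hXm i (measurableSet_singleton _)

end ProbabilityTheory

lemma exp_neg_sq_le_cos {x : ℝ} (hx : x ^ 2 ≤ 1) : exp (-x ^ 2) ≤ cos x := by
  have hinv : exp (-x ^ 2) * exp (x ^ 2) = 1 := by rw [← exp_add, neg_add_cancel, exp_zero]
  nlinarith [add_one_le_exp (x ^ 2), one_sub_sq_div_two_le_cos (x := x), exp_pos (-x ^ 2),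
    sq_nonneg x]

lemma exp_neg_le_cos_pow {n L : ℕ} {r : ℝ} (hr : 0 ≤ r) (hn : (n : ℝ) ≤ r ^ 3) (hL : 2 ≤ L)
    (hrL : r + 1 ≤ L) : exp (-3 * r) ≤ cos (π / (2 * L)) ^ n := by
  have hL' : (2 : ℝ) ≤ L := by exact_mod_cast hL
  have hx : (π / (2 * L)) ^ 2 ≤ 1 := by
    rw [sq_le_one_iff_abs_le_one, abs_div, abs_of_pos pi_pos, div_le_one (by positivity)]
    linarith [pi_le_four, le_abs_self (2 * (L : ℝ))]
  calc exp (-3 * r) ≤ exp (-(π / (2 * L)) ^ 2) ^ n := by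
        have hsq : r ^ 2 ≤ (L : ℝ) ^ 2 := pow_le_pow_left₀ hr (by linarith) 2
        have hpi : π ^ 2 ≤ 12 := by nlinarith [pi_lt_d2, pi_pos]
        have hprod := mul_le_mul_of_nonneg_left (mul_le_mul hsq hpi (sq_nonneg π) (sq_nonneg _)) hr
        have hnpi := mul_le_mul_of_nonneg_right hn (sq_nonneg π)
        rw [← exp_nat_mul, exp_le_exp, mul_neg, neg_mul, neg_le_neg_iff, div_pow,
          mul_div_assoc', div_le_iff₀ (by positivity)]
        linarith
    _ ≤ cos (π / (2 * L)) ^ n := pow_le_pow_left₀ (exp_pos _).le (exp_neg_sq_le_cos hx) n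

lemma exp_neg_le_half_pow (k : ℕ) : exp (-k) ≤ (1 / 2) ^ k := by
  rw [show -(k : ℝ) = k * -1 by ring, exp_nat_mul]
  exact pow_le_pow_left₀ (exp_pos _).le exp_neg_one_lt_half.le k

lemma exp_neg_le_pow_mul_half_pow {n L : ℕ} {r : ℝ} (hr : 0 ≤ r) (hn : (n : ℝ) ≤ r ^ 3)
    (hL : 2 ≤ L) (hrL : r + 1 ≤ L) (hLr : L ≤ r + 2) :
    exp (-3) * exp (-5 * r) ≤ (2 * cos (π / (2 * L))) ^ n * (1 / 2) ^ (2 * L - 1 + n) := by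
  have hk : ((2 * L - 1 : ℕ) : ℝ) ≤ 2 * r + 3 := by
    rw [Nat.cast_sub (by omega)]; push_cast; linarith
  calc exp (-3) * exp (-5 * r) = exp (-3 * r) * exp (-(2 * r + 3)) := by
        rw [← exp_add, ← exp_add]; ring_nf
    _ ≤ cos (π / (2 * L)) ^ n * (1 / 2) ^ (2 * L - 1) :=
        mul_le_mul (exp_neg_le_cos_pow hr hn hL hrL)
          ((exp_le_exp.2 (by linarith)).trans (exp_neg_le_half_pow _)) (exp_pos _).le
          ((exp_pos _).le.trans (exp_neg_le_cos_pow hr hn hL hrL))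
    _ = (2 * cos (π / (2 * L)) * (1 / 2)) ^ n * (1 / 2) ^ (2 * L - 1) := by ring
    _ = (2 * cos (π / (2 * L))) ^ n * (1 / 2) ^ (2 * L - 1 + n) := by
        rw [mul_pow, pow_add]; ring

section SignPaths

variable {m : ℕ}

def pathIncrement (σ : Fin m → ℤˣ) (i : ℕ) : ℤ := if h : i < m then σ ⟨i, h⟩ else 0

def pathPosition (σ : Fin m → ℤˣ) (j : ℕ) : ℤ := ∑ i ∈ range j, pathIncrement σ i

def confinedPaths (L m : ℕ) : Finset (Fin m → ℤˣ) := {σ | ∀ j ≤ m, |pathPosition σ j| < L}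

lemma pathIncrement_snoc (τ : Fin m → ℤˣ) (u : ℤˣ) {i : ℕ} (hi : i < m) :
    pathIncrement (Fin.snoc τ u : Fin (m + 1) → ℤˣ) i = pathIncrement τ i := by
  simp [pathIncrement, hi, Fin.snoc, Nat.lt_succ_of_lt hi]

lemma pathPosition_snoc (τ : Fin m → ℤˣ) (u : ℤˣ) {j : ℕ} (hj : j ≤ m) :
    pathPosition (Fin.snoc τ u : Fin (m + 1) → ℤˣ) j = pathPosition τ j :=
  sum_congr rfl fun _ hi => pathIncrement_snoc τ u ((mem_range.1 hi).trans_le hj)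

lemma pathPosition_snoc_last (τ : Fin m → ℤˣ) (u : ℤˣ) :
    pathPosition (Fin.snoc τ u : Fin (m + 1) → ℤˣ) (m + 1) = pathPosition τ m + u := by
  rw [pathPosition, sum_range_succ, ← pathPosition, pathPosition_snoc τ u le_rfl]
  simp [pathIncrement, Fin.snoc]

lemma snoc_mem_confinedPaths {L : ℕ} (τ : Fin m → ℤˣ) (u : ℤˣ) :
    (Fin.snoc τ u : Fin (m + 1) → ℤˣ) ∈ confinedPaths L (m + 1) ↔
      τ ∈ confinedPaths L m ∧ |pathPosition τ m + u| < L := by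
  simp only [confinedPaths, mem_filter, mem_univ, true_and]
  constructor
  · intro h
    refine ⟨fun j hj => ?_, ?_⟩
    · rw [← pathPosition_snoc τ u hj]; exact h j (by omega)
    · rw [← pathPosition_snoc_last]; exact h _ le_rfl
  · rintro ⟨h, hlast⟩ j hj
    rcases Nat.lt_succ_iff_lt_or_eq.1 (Nat.lt_succ_of_le hj) with hj | rfl
    · rw [pathPosition_snoc τ u (by omega)]; exact h j (by omega)
    · rwa [pathPosition_snoc_last]

end SignPaths

section Counting

variable {L : ℕ}

noncomputable def dirichletEigenfunction (L : ℕ) (x : ℤ) : ℝ := cos (π * x / (2 * L))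

lemma dirichletEigenfunction_eq_zero (hL : L ≠ 0) {x : ℤ} (hx : |x| = L) :
    dirichletEigenfunction L x = 0 := by
  have hL' : (L : ℝ) ≠ 0 := by exact_mod_cast hL
  rcases (abs_eq (Int.natCast_nonneg L)).1 hx with rfl | rfl
  · rw [dirichletEigenfunction, ← cos_pi_div_two]
    congr 1
    push_cast
    field_simp
  · rw [dirichletEigenfunction, ← cos_pi_div_two, ← cos_neg]
    congr 1
    push_cast
    field_simp

lemma dirichletEigenfunction_add_one_add_sub_one (x : ℤ) :
    dirichletEigenfunction L (x + 1) + dirichletEigenfunction L (x - 1) =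
      2 * cos (π / (2 * L)) * dirichletEigenfunction L x := by
  simp only [dirichletEigenfunction, cos_add_cos]
  push_cast
  ring_nf

lemma dirichletEigenfunction_snoc (hL : L ≠ 0) {m : ℕ} (τ : Fin m → ℤˣ) (u : ℤˣ) :
    (if (Fin.snoc τ u : Fin (m + 1) → ℤˣ) ∈ confinedPaths L (m + 1) then
        dirichletEigenfunction L (pathPosition (Fin.snoc τ u : Fin (m + 1) → ℤˣ) (m + 1))
      else 0) =
      if τ ∈ confinedPaths L m then dirichletEigenfunction L (pathPosition τ m + u) else 0 := by
  simp only [snoc_mem_confinedPaths, pathPosition_snoc_last]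
  by_cases hτ : τ ∈ confinedPaths L m
  · by_cases hu : |pathPosition τ m + u| < L
    · simp [hτ, hu]
    · have hτm := (mem_filter.1 hτ).2 m le_rfl
      have hedge : |pathPosition τ m + u| = L := by
        rw [abs_lt] at hτm hu
        rw [abs_eq (Int.natCast_nonneg L)]
        rcases Int.units_eq_one_or u with rfl | rfl <;>
          simp only [Units.val_one, Units.val_neg] at hu ⊢ <;> omega
      simp [hτ, hu, dirichletEigenfunction_eq_zero hL hedge]
  · simp [hτ]

lemma sum_confinedPaths_dirichletEigenfunction (hL : L ≠ 0) (m : ℕ) :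
    ∑ σ ∈ confinedPaths L m, dirichletEigenfunction L (pathPosition σ m) =
      (2 * cos (π / (2 * L))) ^ m := by
  induction m with
  | zero => simp [confinedPaths, pathPosition, dirichletEigenfunction, Nat.pos_of_ne_zero hL]
  | succ m ih =>
    calc ∑ σ ∈ confinedPaths L (m + 1), dirichletEigenfunction L (pathPosition σ (m + 1))
        = ∑ σ, if σ ∈ confinedPaths L (m + 1) then
            dirichletEigenfunction L (pathPosition σ (m + 1)) else 0 := by
          rw [sum_ite_mem, univ_inter]
      _ = ∑ p : ℤˣ × (Fin m → ℤˣ), if p.2 ∈ confinedPaths L m then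
            dirichletEigenfunction L (pathPosition p.2 m + p.1) else 0 := by
          rw [← (Fin.snocEquiv fun _ => ℤˣ).sum_comp]
          exact sum_congr rfl fun p _ => dirichletEigenfunction_snoc hL p.2 p.1
      _ = ∑ τ ∈ confinedPaths L m, (dirichletEigenfunction L (pathPosition τ m + 1) +
            dirichletEigenfunction L (pathPosition τ m - 1)) := by
          rw [Fintype.sum_prod_type]
          simp only [sum_ite_mem, univ_inter]
          rw [sum_comm]
          simp [sub_eq_add_neg]
      _ = (2 * cos (π / (2 * L))) ^ (m + 1) := by
          simp only [dirichletEigenfunction_add_one_add_sub_one, ← mul_sum, ih, pow_succ']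

lemma pow_le_card_confinedPaths (hL : L ≠ 0) (m : ℕ) :
    (2 * cos (π / (2 * L))) ^ m ≤ #(confinedPaths L m) := by
  rw [← sum_confinedPaths_dirichletEigenfunction hL, card_eq_sum_ones, Nat.cast_sum]
  exact sum_le_sum fun σ _ => by rw [Nat.cast_one]; exact cos_le_one _

end Counting

lemma manhattanWalk_eq_of_confined {U V : ℤ → ℤ} {L m : ℕ} (hU : ∀ y : ℤ, |y| < L → U y = 1)
    (hV : ∀ j ≤ m, |∑ i ∈ range j, V i| < L) :
    ∀ j ≤ m + 1, manhattanWalk U V j = ((j : ℤ), ∑ i ∈ range j, V i)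
  | 0, _ => rfl
  | j + 1, hj => by
    rw [manhattanWalk.eq_2, manhattanWalk_eq_of_confined hU hV j (by omega),
      hU _ (hV j (by omega)), sum_range_succ]
    push_cast
    rfl

section StraightRun

noncomputable def straightRunIndices (L m : ℕ) : Finset (ℤ ⊕ ℤ) :=
  (Ioo (-L : ℤ) L).disjSum ((range m).map Nat.castEmbedding)

def straightRunConfig {m : ℕ} (σ : Fin m → ℤˣ) : ℤ ⊕ ℤ → ℤ :=
  Sum.elim (fun _ => 1) (fun x => pathIncrement σ x.toNat)

variable {L m : ℕ}

lemma card_straightRunIndices : #(straightRunIndices L m) = 2 * L - 1 + m := by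
  simp only [straightRunIndices, card_disjSum, Int.card_Ioo, card_map, card_range]
  omega

lemma eq_of_straightRunConfig_eq {σ τ : Fin m → ℤˣ}
    (h : ∀ i ∈ straightRunIndices L m, straightRunConfig σ i = straightRunConfig τ i) :
    σ = τ := by
  funext k
  have hk := h (.inr k) (by simp [straightRunIndices])
  simpa [straightRunConfig, pathIncrement, Units.ext_iff] using hk

lemma manhattanWalk_fst_of_straightRunConfig {U V : ℤ → ℤ} {σ : Fin m → ℤˣ}
    (hσ : σ ∈ confinedPaths L m)
    (h : ∀ i ∈ straightRunIndices L m, Sum.elim U V i = straightRunConfig σ i) :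
    (manhattanWalk U V (m + 1)).1 = m + 1 := by
  have hU : ∀ y : ℤ, |y| < L → U y = 1 := fun y hy =>
    h (.inl y) (by simpa [straightRunIndices, abs_lt] using hy)
  have hV : ∀ j ≤ m, ∑ i ∈ range j, V i = pathPosition σ j := fun j hj =>
    sum_congr rfl fun i hi => h (.inr i) <| by
      simpa [straightRunIndices] using (mem_range.1 hi).trans_le hj
  rw [manhattanWalk_eq_of_confined hU (fun j hj => hV j hj ▸ (mem_filter.1 hσ).2 j hj) _ le_rfl]
  push_cast
  rfl

end StraightRun

lemma card_confinedPaths_mul_le_measure {Ω : Type*} [MeasurableSpace Ω] {μ : Measure Ω}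
    {U V : ℤ → Ω → ℤ} (hUmeas : ∀ y, Measurable (U y)) (hVmeas : ∀ x, Measurable (V x))
    (hU1 : ∀ y, μ {ω | U y ω = 1} = 1 / 2)
    (hV1 : ∀ x, μ {ω | V x ω = 1} = 1 / 2) (hVm1 : ∀ x, μ {ω | V x ω = -1} = 1 / 2)
    (hindep : iIndepFun (fun i : ℤ ⊕ ℤ => Sum.elim U V i) μ) (L m : ℕ) :
    #(confinedPaths L m) * (1 / 2 : ℝ≥0∞) ^ (2 * L - 1 + m) ≤
      μ {ω | (manhattanWalk (fun y => U y ω) (fun x => V x ω) (m + 1)).1 = m + 1} := by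
  have hp : ∀ σ ∈ confinedPaths L m, ∀ i ∈ straightRunIndices L m,
      μ ((fun i : ℤ ⊕ ℤ => Sum.elim U V i) i ⁻¹' {straightRunConfig σ i}) = 1 / 2 := by
    rintro σ - (y | x) hi
    · exact hU1 y
    · obtain ⟨k, hk, rfl⟩ : ∃ k < m, (k : ℤ) = x := by simpa [straightRunIndices] using hi
      rcases Int.units_eq_one_or (σ ⟨k, hk⟩) with h | h
      all_goals
        simp only [straightRunConfig, Sum.elim_inr, Int.toNat_natCast, pathIncrement, dif_pos hk,
          h]
      exacts [hV1 k, hVm1 k]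
  rw [← card_straightRunIndices, ← hindep.measure_biUnion_iInter_preimage_singleton
    (by rintro (y | x); exacts [hUmeas y, hVmeas x]) _ _ _
    (fun σ _ τ _ => eq_of_straightRunConfig_eq) hp]
  refine measure_mono fun ω hω => ?_
  simp only [Set.mem_iUnion, Set.mem_iInter, Set.mem_preimage, Set.mem_singleton_iff] at hω
  obtain ⟨σ, hσ, hω⟩ := hω
  exact manhattanWalk_fst_of_straightRunConfig hσ fun i hi => by
    rcases i with y | x <;> exact hω _ hi

theorem range_stretched_exponential_lower_bound_general
    {Ω : Type*} [MeasurableSpace Ω] (μ : Measure Ω)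
    (U V : ℤ → Ω → ℤ)
    (hUmeas : ∀ y, Measurable (U y)) (hVmeas : ∀ x, Measurable (V x))
    (hU1 : ∀ y, μ {ω | U y ω = 1} = 1/2)
    (hV1 : ∀ x, μ {ω | V x ω = 1} = 1/2) (hVm1 : ∀ x, μ {ω | V x ω = -1} = 1/2)
    (hindep : iIndepFun
      (fun i : ℤ ⊕ ℤ => Sum.elim U V i) μ)
    (Z : Ω → ℕ → ℤ × ℤ)
    (hZ : ∀ ω n, Z ω n = manhattanWalk (fun y => U y ω) (fun x => V x ω) n) :
    ∃ C₁ > (0 : ℝ), ∃ c₁ > (0 : ℝ), ∀ n : ℕ,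
      ENNReal.ofReal (C₁ * Real.exp (-c₁ * (n : ℝ) ^ ((1 : ℝ)/3)))
        ≤ μ {ω | ∃ i : ℕ, (n : ℤ) < max |(Z ω i).1| |(Z ω i).2|} := by
  refine ⟨exp (-3), exp_pos _, 5, by norm_num, fun n => ?_⟩
  set r := (n : ℝ) ^ ((1 : ℝ) / 3)
  have hr : 0 ≤ r := by positivity
  have hn : (n : ℝ) ≤ r ^ 3 := by
    rw [← rpow_natCast, ← rpow_mul n.cast_nonneg]; norm_num
  set L := ⌊r⌋₊ + 2
  have hrL : r + 1 ≤ L := by push_cast [L]; linarith [Nat.lt_floor_add_one r]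
  have hLr : (L : ℝ) ≤ r + 2 := by push_cast [L]; linarith [Nat.floor_le hr]
  calc ENNReal.ofReal (exp (-3) * exp (-5 * r))
      ≤ ENNReal.ofReal ((2 * cos (π / (2 * L))) ^ n * (1 / 2) ^ (2 * L - 1 + n)) :=
        ENNReal.ofReal_le_ofReal (exp_neg_le_pow_mul_half_pow hr hn (by omega) hrL hLr)
    _ ≤ #(confinedPaths L n) * (1 / 2 : ℝ≥0∞) ^ (2 * L - 1 + n) := by
        rw [ENNReal.ofReal_mul' (by positivity),
          ENNReal.ofReal_pow (by norm_num : (0 : ℝ) ≤ 1 / 2), ← ENNReal.ofReal_natCast,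
          ENNReal.ofReal_div_of_pos two_pos, ENNReal.ofReal_one, ENNReal.ofReal_ofNat]
        gcongr
        exact pow_le_card_confinedPaths (by omega) n
    _ ≤ μ {ω | (manhattanWalk (fun y => U y ω) (fun x => V x ω) (n + 1)).1 = n + 1} :=
        card_confinedPaths_mul_le_measure hUmeas hVmeas hU1 hV1 hVm1 hindep L n
    _ ≤ _ := by
        refine measure_mono fun ω hω => ⟨n + 1, ?_⟩
        rw [Set.mem_ofPred_eq, ← hZ] at hω
        exact lt_max_of_lt_left (by rw [hω, abs_of_nonneg (by positivity)]; exact lt_add_one _)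

/-- **Stretched-exponential lower bound on the range.**  For the diagonal walk on
the 2D randomly oriented Manhattan lattice with i.i.d. uniform `±1` orientations,
there exist constants `C₁, c₁ > 0` such that for all `n`,
`P(max_i ‖Z i‖ > n) ≥ C₁ exp(−c₁ n^{1/3})` (sup norm on `ℤ²`). -/
theorem range_stretched_exponential_lower_bound
    {Ω : Type*} [MeasurableSpace Ω] (μ : Measure Ω) [IsProbabilityMeasure μ]
    (U V : ℤ → Ω → ℤ)
    (hUmeas : ∀ y, Measurable (U y)) (hVmeas : ∀ x, Measurable (V x))
    (hU1 : ∀ y, μ {ω | U y ω = 1} = 1/2) (hUm1 : ∀ y, μ {ω | U y ω = -1} = 1/2)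
    (hV1 : ∀ x, μ {ω | V x ω = 1} = 1/2) (hVm1 : ∀ x, μ {ω | V x ω = -1} = 1/2)
    (hindep : iIndepFun
      (fun i : ℤ ⊕ ℤ => Sum.elim U V i) μ)
    (Z : Ω → ℕ → ℤ × ℤ)
    (hZ : ∀ ω n, Z ω n = manhattanWalk (fun y => U y ω) (fun x => V x ω) n) :
    ∃ C₁ > (0 : ℝ), ∃ c₁ > (0 : ℝ), ∀ n : ℕ,
      ENNReal.ofReal (C₁ * Real.exp (-c₁ * (n : ℝ) ^ ((1 : ℝ)/3)))
        ≤ μ {ω | ∃ i : ℕ, (n : ℤ) < max |(Z ω i).1| |(Z ω i).2|} :=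
  range_stretched_exponential_lower_bound_general μ U V hUmeas hVmeas hU1 hV1 hVm1 hindep Z hZ
end
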